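/- arXiv:0807.1808 — 4 statements merged into one kernel-verified Lean document; each statement's English description precedes it below -/
import Mathlib

section
/- Let ε ∈ {1, -1}, b > 0, a, c ∈ ℝ, and let q(t) = -(1+εb)t² + 2εbct - εb(1+c²) + a. If there exists a nonempty open interval of values t with ε(a - t²) > 0 and εq(t) ≥ 0, then: for ε = 1, (1+b)(a-b) ≥ bc²; for ε = -1 with b > 1, bc² ≥ (b-1)(a+b); and for ε = -1 with b = 1, either c ≠ 0 or a ≤ -1. -/
/-- Restrictions on the parameters `a`, `b`, `c` of the PMC ODE:
if `ε(a - t²) > 0` and `εq(t) ≥ 0` hold on a nonempty open interval, where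
`q(t) = -(1+εb)t² + 2εbct - εb(1+c²) + a`, then the stated inequalities follow. -/
theorem stmt3 (ε a b c : ℝ) (hε : ε = 1 ∨ ε = -1) (hb : 0 < b)
    (hexists : ∃ t₁ t₂ : ℝ, t₁ < t₂ ∧ ∀ t ∈ Set.Ioo t₁ t₂,
      0 < ε * (a - t ^ 2) ∧
      0 ≤ ε * (-(1 + ε * b) * t ^ 2 + 2 * ε * b * c * t - ε * b * (1 + c ^ 2) + a)) :
    (ε = 1 → (1 + b) * (a - b) ≥ b * c ^ 2) ∧
    (ε = -1 → 1 < b → b * c ^ 2 ≥ (b - 1) * (a + b)) ∧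
    (ε = -1 → b = 1 → (c ≠ 0 ∨ a ≤ -1)) := by
  obtain ⟨t₁, t₂, hlt, h⟩ := hexists
  set t : ℝ := (t₁ + t₂) / 2 with ht
  have hmem : t ∈ Set.Ioo t₁ t₂ := ⟨by simp [ht]; linarith, by simp [ht]; linarith⟩
  obtain ⟨h1, h2⟩ := h t hmem
  refine ⟨?_, ?_, ?_⟩
  · intro he; subst he
    nlinarith [sq_nonneg ((1 + b) * t - b * c), h2]
  · intro he hb1; subst he
    nlinarith [sq_nonneg ((b - 1) * t - b * c), h2]
  · intro he hb1
    rcases eq_or_ne c 0 with hc | hc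
    · right
      subst he; subst hb1; subst hc
      nlinarith [h2]
    · exact Or.inl hc
end

section
/- The geodesic circle {x ∈ ℍ² : x₃ = a}, a > 1, has constant geodesic curvature a/√(a²-1) > 1. Hence the torus T̂_{a,â} = {(x,y) ∈ ℍ²×ℍ² : x₃ = a, y₃ = â} with 1 < a ≤ â has 4|H|² = a²/(a²-1) + â²/(â²-1) > 2, i.e. |H|² > 1/2. -/
/-!
The circle at height `a` is a Euclidean circle of radius `r = √(a² - 1)`. Parametrized by arc
length, its geodesic curvature vector `γ'' - γ` has Lorentz square `(r + 1/r)² - a² = a²/r²`.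
Since `a²/(a² - 1) > 1` for `a > 1`, both summands of `4|H|²` exceed `1`.
-/

def lorentzInner (u v : Fin 3 → ℝ) : ℝ := u 0 * v 0 + u 1 * v 1 - u 2 * v 2

open Real

theorem HasDerivAt.vecCons₃ {f g h : ℝ → ℝ} {f' g' h' t : ℝ} (hf : HasDerivAt f f' t)
    (hg : HasDerivAt g g' t) (hh : HasDerivAt h h' t) :
    HasDerivAt (fun s => ![f s, g s, h s]) ![f', g', h'] t := by
  refine hasDerivAt_pi.2 fun i => ?_
  fin_cases i
  exacts [hf, hg, hh]

noncomputable def lorentzCircle (r c t : ℝ) : Fin 3 → ℝ := ![r * cos (t / r), r * sin (t / r), c]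

section lorentzCircle

variable {r : ℝ} (c : ℝ)

theorem lorentzInner_lorentzCircle_self (t : ℝ) :
    lorentzInner (lorentzCircle r c t) (lorentzCircle r c t) = r ^ 2 - c ^ 2 := by
  simp only [lorentzInner, lorentzCircle, Matrix.cons_val]
  linear_combination r ^ 2 * sin_sq_add_cos_sq (t / r)

theorem deriv_lorentzCircle (hr : r ≠ 0) :
    deriv (lorentzCircle r c) = fun t => ![-sin (t / r), cos (t / r), 0] := by
  funext t
  have hθ : HasDerivAt (fun s => s / r) r⁻¹ t := by simpa using (hasDerivAt_id t).div_const r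
  refine (HasDerivAt.vecCons₃ (((hasDerivAt_cos _).comp t hθ).const_mul r)
    (((hasDerivAt_sin _).comp t hθ).const_mul r) (hasDerivAt_const t c)).deriv.trans ?_
  field_simp

theorem deriv_deriv_lorentzCircle (hr : r ≠ 0) :
    deriv (deriv (lorentzCircle r c)) = fun t => ![-(cos (t / r) / r), -(sin (t / r) / r), 0] := by
  funext t
  have hθ : HasDerivAt (fun s => s / r) r⁻¹ t := by simpa using (hasDerivAt_id t).div_const r
  rw [deriv_lorentzCircle c hr]
  refine (HasDerivAt.vecCons₃ ((hasDerivAt_sin _).comp t hθ).neg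
    ((hasDerivAt_cos _).comp t hθ) (hasDerivAt_const t (0 : ℝ))).deriv.trans ?_
  simp [div_eq_mul_inv]

theorem lorentzInner_deriv_lorentzCircle_self (hr : r ≠ 0) (t : ℝ) :
    lorentzInner (deriv (lorentzCircle r c) t) (deriv (lorentzCircle r c) t) = 1 := by
  simp only [deriv_lorentzCircle c hr, lorentzInner, Matrix.cons_val]
  linear_combination sin_sq_add_cos_sq (t / r)

/-- On `ℍ² ⊂ ℝ³₁` the covariant acceleration of a unit-speed curve is `γ'' - γ`, so this is the
squared geodesic curvature. -/
theorem lorentzInner_deriv_deriv_sub_lorentzCircle_self (hr : r ≠ 0) (t : ℝ) :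
    lorentzInner (deriv (deriv (lorentzCircle r c)) t - lorentzCircle r c t)
      (deriv (deriv (lorentzCircle r c)) t - lorentzCircle r c t) = (r + r⁻¹) ^ 2 - c ^ 2 := by
  simp only [deriv_deriv_lorentzCircle c hr, lorentzInner, lorentzCircle, Pi.sub_apply,
    Matrix.cons_val]
  linear_combination (r + r⁻¹) ^ 2 * sin_sq_add_cos_sq (t / r)

end lorentzCircle

theorem one_lt_sq_div_sq_sub_one {a : ℝ} (ha : 1 < a) : 1 < a ^ 2 / (a ^ 2 - 1) := by
  rw [lt_div_iff₀ (by nlinarith)]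
  linarith

theorem one_lt_div_sqrt_sq_sub_one {a : ℝ} (ha : 1 < a) : 1 < a / √(a ^ 2 - 1) := by
  rw [lt_div_iff₀ (sqrt_pos.2 (by nlinarith)), one_mul, sqrt_lt' (by linarith)]
  linarith

/-- The geodesic circle `{x ∈ ℍ² : x₃ = a}`, `a > 1`, in its unit-speed
parametrization `γ`, has constant geodesic curvature `a/√(a²-1) > 1`; hence the
torus product of two such circles with `1 < a ≤ â` and `4|H|² = k_α² + k_β²`
satisfies `4|H|² = a²/(a²-1) + â²/(â²-1) > 2`, i.e. `|H|² > 1/2`. -/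
theorem stmt8 (a a' : ℝ) (ha : 1 < a) (haa' : a ≤ a')
    (γ : ℝ → Fin 3 → ℝ)
    (hγ : γ = fun t => ![Real.sqrt (a ^ 2 - 1) * Real.cos (t / Real.sqrt (a ^ 2 - 1)),
      Real.sqrt (a ^ 2 - 1) * Real.sin (t / Real.sqrt (a ^ 2 - 1)), a])
    (Hsq : ℝ)
    (hH : 4 * Hsq = a ^ 2 / (a ^ 2 - 1) + a' ^ 2 / (a' ^ 2 - 1)) :
    (∀ t, lorentzInner (γ t) (γ t) = -1 ∧ 0 < γ t 2) ∧
    (∀ t, lorentzInner (deriv γ t) (deriv γ t) = 1) ∧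
    (∀ t, lorentzInner (deriv (deriv γ) t - γ t) (deriv (deriv γ) t - γ t) =
      (a / Real.sqrt (a ^ 2 - 1)) ^ 2) ∧
    1 < a / Real.sqrt (a ^ 2 - 1) ∧
    2 < 4 * Hsq ∧ 1 / 2 < Hsq := by
  replace hγ : γ = lorentzCircle √(a ^ 2 - 1) a := hγ
  subst hγ
  have hr2 : √(a ^ 2 - 1) ^ 2 = a ^ 2 - 1 := sq_sqrt (by nlinarith)
  have hr : √(a ^ 2 - 1) ≠ 0 := (sqrt_pos.2 (by nlinarith)).ne'
  have hk : 1 < a ^ 2 / (a ^ 2 - 1) := one_lt_sq_div_sq_sub_one ha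
  have hk' : 1 < a' ^ 2 / (a' ^ 2 - 1) := one_lt_sq_div_sq_sub_one (ha.trans_le haa')
  refine ⟨fun t => ⟨?_, by simp [lorentzCircle]; linarith⟩,
    lorentzInner_deriv_lorentzCircle_self a hr, fun t => ?_, one_lt_div_sqrt_sq_sub_one ha,
    by linarith, by linarith⟩
  · rw [lorentzInner_lorentzCircle_self, hr2]
    ring
  · rw [lorentzInner_deriv_deriv_sub_lorentzCircle_self a hr]
    field_simp
    rw [hr2]
    ring
end

section
/- For λ > 0, define ψ : ℝ² → ℝ³ by ψ(x,y) = (√(1+λ²)/λ)·(sinh x, cosh x · sinh y + cosh y/√(1+λ²), cosh x · cosh y + sinh y/√(1+λ²)) and η(x,y) = (y + √(1+λ²)·cosh x)/λ. Then ψ takes values in ℍ² = {x₁² + x₂² - x₃² = -1, x₃ > 0}, and the map Ψ = (ψ, η) : ℝ² → ℍ² × ℝ is conformal with |Ψ_x|² = |Ψ_y|² = ((1+λ²)/λ²)·cosh²x and ⟨Ψ_x, Ψ_y⟩ = 0. -/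
open Real

noncomputable def examplePsi (c s x y : ℝ) : Fin 3 → ℝ :=
  fun i => c * ![sinh x, cosh x * sinh y + cosh y / s, cosh x * cosh y + sinh y / s] i

theorem lorentzInner_const_mul_vec (c d a₀ a₁ a₂ b₀ b₁ b₂ : ℝ) :
    lorentzInner (fun i => c * ![a₀, a₁, a₂] i) (fun i => d * ![b₀, b₁, b₂] i) =
      c * d * (a₀ * b₀ + a₁ * b₁ - a₂ * b₂) := by
  simp only [lorentzInner, Matrix.cons_val_zero, Matrix.cons_val_one, Matrix.cons_val_two,
    Matrix.head_cons, Matrix.tail_cons]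
  ring

section

variable (c s x y : ℝ)

theorem hasDerivAt_examplePsi_left :
    HasDerivAt (fun t => examplePsi c s t y)
      (fun i => c * ![cosh x, sinh x * sinh y, sinh x * cosh y] i) x := by
  refine hasDerivAt_pi.2 fun i => ?_
  fin_cases i <;> refine HasDerivAt.const_mul c ?_
  · exact hasDerivAt_sinh x
  · exact ((hasDerivAt_cosh x).mul_const _).add_const _
  · exact ((hasDerivAt_cosh x).mul_const _).add_const _

theorem hasDerivAt_examplePsi_right :
    HasDerivAt (fun t => examplePsi c s x t)
      (fun i => c * ![0, cosh x * cosh y + sinh y / s, cosh x * sinh y + cosh y / s] i) y := by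
  refine hasDerivAt_pi.2 fun i => ?_
  fin_cases i <;> refine HasDerivAt.const_mul c ?_
  · exact hasDerivAt_const y _
  · exact ((hasDerivAt_sinh y).const_mul _).add ((hasDerivAt_cosh y).div_const s)
  · exact ((hasDerivAt_cosh y).const_mul _).add ((hasDerivAt_sinh y).div_const s)

theorem examplePsi_two_pos {c s : ℝ} (hc : 0 < c) (hs : 1 ≤ s) :
    0 < examplePsi c s x y 2 := by
  have hcosh : cosh y + sinh y / s = ((s - 1) * cosh y + exp y) / s := by
    rw [← cosh_add_sinh y]
    field_simp
    ring
  have hpos : 0 < cosh y + sinh y / s := by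
    rw [hcosh]
    have : 0 ≤ (s - 1) * cosh y := mul_nonneg (sub_nonneg.2 hs) (cosh_pos y).le
    exact div_pos (add_pos_of_nonneg_of_pos this (exp_pos y)) (by linarith)
  have : cosh y ≤ cosh x * cosh y := le_mul_of_one_le_left (cosh_pos y).le (one_le_cosh x)
  show 0 < c * (cosh x * cosh y + sinh y / s)
  exact mul_pos hc (by linarith)

end

section

variable {l s : ℝ} (x y : ℝ)

theorem lorentzInner_examplePsi_self (hs : s ^ 2 = 1 + l ^ 2) (hl : l ≠ 0) :
    lorentzInner (examplePsi (s / l) s x y) (examplePsi (s / l) s x y) = -1 := by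
  have hs0 : s ≠ 0 := by rintro rfl; nlinarith
  unfold examplePsi
  rw [lorentzInner_const_mul_vec]
  field_simp
  linear_combination -s ^ 2 * cosh_sq x + (1 - s ^ 2 * cosh x ^ 2) * cosh_sq y - hs

theorem lorentzInner_deriv_examplePsi_left_add_sq (hs : s ^ 2 = 1 + l ^ 2) (hl : l ≠ 0) :
    lorentzInner (deriv (fun t => examplePsi (s / l) s t y) x)
        (deriv (fun t => examplePsi (s / l) s t y) x) + (s * sinh x / l) ^ 2 =
      (1 + l ^ 2) / l ^ 2 * cosh x ^ 2 := by
  rw [(hasDerivAt_examplePsi_left _ _ x y).deriv, lorentzInner_const_mul_vec]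
  field_simp
  linear_combination cosh x ^ 2 * hs - s ^ 2 * sinh x ^ 2 * cosh_sq y

theorem lorentzInner_deriv_examplePsi_right_add_sq (hs : s ^ 2 = 1 + l ^ 2) (hl : l ≠ 0) :
    lorentzInner (deriv (fun t => examplePsi (s / l) s x t) y)
        (deriv (fun t => examplePsi (s / l) s x t) y) + (1 / l) ^ 2 =
      (1 + l ^ 2) / l ^ 2 * cosh x ^ 2 := by
  have hs0 : s ≠ 0 := by rintro rfl; nlinarith
  rw [(hasDerivAt_examplePsi_right _ _ x y).deriv, lorentzInner_const_mul_vec]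
  field_simp
  linear_combination (s ^ 2 * cosh x ^ 2 - 1) * cosh_sq y + cosh x ^ 2 * hs

theorem lorentzInner_deriv_examplePsi_left_right_add_mul (hs : s ^ 2 = 1 + l ^ 2) (hl : l ≠ 0) :
    lorentzInner (deriv (fun t => examplePsi (s / l) s t y) x)
        (deriv (fun t => examplePsi (s / l) s x t) y) + s * sinh x / l * (1 / l) = 0 := by
  have hs0 : s ≠ 0 := by rintro rfl; nlinarith
  rw [(hasDerivAt_examplePsi_left _ _ x y).deriv, (hasDerivAt_examplePsi_right _ _ x y).deriv,
    lorentzInner_const_mul_vec]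
  field_simp
  linear_combination -s * sinh x * cosh_sq y

end

/-- For `λ > 0`, the map `Ψ = (ψ, η) : ℝ² → ℍ² × ℝ` of Example 3 is a conformal
CMC embedding: `ψ` takes values in ℍ², and
`|Ψ_x|² = |Ψ_y|² = ((1+λ²)/λ²)·cosh²x`, `⟨Ψ_x, Ψ_y⟩ = 0`
(product metric: Lorentz inner product on the ℍ² factor plus the ℝ factor). -/
theorem stmt10 (l : ℝ) (hl : 0 < l)
    (ψ : ℝ → ℝ → Fin 3 → ℝ) (η : ℝ → ℝ → ℝ)
    (hψ : ψ = fun x y => fun i => (Real.sqrt (1 + l ^ 2) / l) *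
      (![Real.sinh x,
         Real.cosh x * Real.sinh y + Real.cosh y / Real.sqrt (1 + l ^ 2),
         Real.cosh x * Real.cosh y + Real.sinh y / Real.sqrt (1 + l ^ 2)] i))
    (hη : η = fun x y => (y + Real.sqrt (1 + l ^ 2) * Real.cosh x) / l) :
    (∀ x y, lorentzInner (ψ x y) (ψ x y) = -1 ∧ 0 < ψ x y 2) ∧
    (∀ x y, lorentzInner (deriv (fun t => ψ t y) x) (deriv (fun t => ψ t y) x)
        + (deriv (fun t => η t y) x) ^ 2 = ((1 + l ^ 2) / l ^ 2) * (Real.cosh x) ^ 2) ∧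
    (∀ x y, lorentzInner (deriv (fun t => ψ x t) y) (deriv (fun t => ψ x t) y)
        + (deriv (fun t => η x t) y) ^ 2 = ((1 + l ^ 2) / l ^ 2) * (Real.cosh x) ^ 2) ∧
    (∀ x y, lorentzInner (deriv (fun t => ψ t y) x) (deriv (fun t => ψ x t) y)
        + (deriv (fun t => η t y) x) * (deriv (fun t => η x t) y) = 0) := by
  set s := √(1 + l ^ 2)
  obtain rfl : ψ = examplePsi (s / l) s := hψ
  subst hη
  beta_reduce
  have hs : s ^ 2 = 1 + l ^ 2 := sq_sqrt (by positivity)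
  have hl0 : l ≠ 0 := hl.ne'
  have hηx : ∀ x y, deriv (fun t => (y + s * cosh t) / l) x = s * sinh x / l := fun x y =>
    (((hasDerivAt_cosh x).const_mul s).const_add y).div_const l |>.deriv
  have hηy : ∀ x y, deriv (fun t => (t + s * cosh x) / l) y = 1 / l := fun x y => by simp
  simp only [hηx, hηy]
  exact ⟨fun x y => ⟨lorentzInner_examplePsi_self x y hs hl0,
      examplePsi_two_pos x y (by positivity) (one_le_sqrt.2 (by nlinarith))⟩,
    fun x y => lorentzInner_deriv_examplePsi_left_add_sq x y hs hl0,
    fun x y => lorentzInner_deriv_examplePsi_right_add_sq x y hs hl0,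
    fun x y => lorentzInner_deriv_examplePsi_left_right_add_mul x y hs hl0⟩
end

section
/- For 0 < H < 1/2, define ψ₀ : (-π/2, π/2) × ℝ → ℝ³ by ψ₀(x,y) = (1/√(1-4H²))·(tan x, sinh y/cos x + 2H²e^{-y}cos x, cosh y/cos x - 2H²e^{-y}cos x) and η₀(x,y) = (2H/√(1-4H²))·(y - log cos x). Then ψ₀ takes values in ℍ², and Ψ₀ = (ψ₀, η₀) is a conformal map into ℍ² × ℝ with conformal factor |Ψ₀_x|² = |Ψ₀_y|² = 1/((1-4H²)cos²x) and ⟨Ψ₀_x, Ψ₀_y⟩ = 0. -/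
open Real

noncomputable def psi₀ (H x y : ℝ) : Fin 3 → ℝ :=
  ![tan x, sinh y / cos x + 2 * H ^ 2 * exp (-y) * cos x,
    cosh y / cos x - 2 * H ^ 2 * exp (-y) * cos x]

noncomputable def dxPsi₀ (H x y : ℝ) : Fin 3 → ℝ :=
  ![1 / cos x ^ 2, sinh y * sin x / cos x ^ 2 - 2 * H ^ 2 * exp (-y) * sin x,
    cosh y * sin x / cos x ^ 2 + 2 * H ^ 2 * exp (-y) * sin x]

noncomputable def dyPsi₀ (H x y : ℝ) : Fin 3 → ℝ :=
  ![0, cosh y / cos x - 2 * H ^ 2 * exp (-y) * cos x,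
    sinh y / cos x + 2 * H ^ 2 * exp (-y) * cos x]

theorem lorentzInner_smul (a b : ℝ) (u v : Fin 3 → ℝ) :
    lorentzInner (a • u) (b • v) = a * b * lorentzInner u v := by
  simp only [lorentzInner, Pi.smul_apply, smul_eq_mul]
  ring

theorem hasDerivAt_psi₀_in_x (H y : ℝ) {x : ℝ} (hx : cos x ≠ 0) :
    HasDerivAt (fun t => psi₀ H t y) (dxPsi₀ H x y) x := by
  have hsec : HasDerivAt (fun t => (cos t)⁻¹) (sin x / cos x ^ 2) x :=
    ((hasDerivAt_cos x).inv hx).congr_deriv (by ring)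
  refine hasDerivAt_pi.2 fun i => ?_
  fin_cases i <;>
    simp only [psi₀, dxPsi₀, Fin.zero_eta, Fin.mk_one, Fin.reduceFinMk, Matrix.cons_val]
  · exact hasDerivAt_tan hx
  · exact ((hsec.const_mul (sinh y)).add ((hasDerivAt_cos x).const_mul (2 * H ^ 2 * exp (-y))))
      |>.congr_deriv (by ring)
  · exact ((hsec.const_mul (cosh y)).sub ((hasDerivAt_cos x).const_mul (2 * H ^ 2 * exp (-y))))
      |>.congr_deriv (by ring)

theorem hasDerivAt_psi₀_in_y (H x y : ℝ) :
    HasDerivAt (fun t => psi₀ H x t) (dyPsi₀ H x y) y := by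
  have hexp : HasDerivAt (fun t => exp (-t)) (-exp (-y)) y := by
    simpa using (hasDerivAt_neg y).exp
  refine hasDerivAt_pi.2 fun i => ?_
  fin_cases i <;>
    simp only [psi₀, dyPsi₀, Fin.zero_eta, Fin.mk_one, Fin.reduceFinMk, Matrix.cons_val]
  · exact hasDerivAt_const y (tan x)
  · exact ((hasDerivAt_sinh y).div_const (cos x)).add
      ((hexp.const_mul (2 * H ^ 2)).mul_const (cos x)) |>.congr_deriv (by ring)
  · exact ((hasDerivAt_cosh y).div_const (cos x)).sub
      ((hexp.const_mul (2 * H ^ 2)).mul_const (cos x)) |>.congr_deriv (by ring)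

theorem hasDerivAt_log_cos {x : ℝ} (hx : cos x ≠ 0) :
    HasDerivAt (fun t => log (cos t)) (-tan x) x := by
  simpa [tan_eq_sin_div_cos, neg_div] using (hasDerivAt_cos x).log hx

theorem exp_neg_mul_sinh_add_cosh (y : ℝ) : exp (-y) * (sinh y + cosh y) = 1 := by
  rw [sinh_add_cosh, ← exp_add, neg_add_cancel, exp_zero]

theorem lorentzInner_psi₀_self (H y : ℝ) {x : ℝ} (hx : cos x ≠ 0) :
    lorentzInner (psi₀ H x y) (psi₀ H x y) = 4 * H ^ 2 - 1 := by
  simp only [lorentzInner, psi₀, Matrix.cons_val_zero, Matrix.cons_val_one, Matrix.cons_val_two,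
    Matrix.head_cons, Matrix.tail_cons, tan_eq_sin_div_cos]
  field_simp
  linear_combination sin_sq_add_cos_sq x - cosh_sq_sub_sinh_sq y
    + 4 * H ^ 2 * cos x ^ 2 * exp_neg_mul_sinh_add_cosh y

theorem lorentzInner_dxPsi₀_self_add (H y : ℝ) {x : ℝ} (hx : cos x ≠ 0) :
    lorentzInner (dxPsi₀ H x y) (dxPsi₀ H x y) + (2 * H * tan x) ^ 2 = 1 / cos x ^ 2 := by
  simp only [lorentzInner, dxPsi₀, Matrix.cons_val_zero, Matrix.cons_val_one, Matrix.cons_val_two,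
    Matrix.head_cons, Matrix.tail_cons, tan_eq_sin_div_cos]
  field_simp
  linear_combination -sin_sq_add_cos_sq x - sin x ^ 2 * cosh_sq_sub_sinh_sq y
    - 4 * sin x ^ 2 * cos x ^ 2 * H ^ 2 * exp_neg_mul_sinh_add_cosh y

theorem lorentzInner_dyPsi₀_self_add (H y : ℝ) {x : ℝ} (hx : cos x ≠ 0) :
    lorentzInner (dyPsi₀ H x y) (dyPsi₀ H x y) + (2 * H) ^ 2 = 1 / cos x ^ 2 := by
  simp only [lorentzInner, dyPsi₀, Matrix.cons_val_zero, Matrix.cons_val_one, Matrix.cons_val_two,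
    Matrix.head_cons, Matrix.tail_cons]
  field_simp
  linear_combination cosh_sq_sub_sinh_sq y - 4 * cos x ^ 2 * H ^ 2 * exp_neg_mul_sinh_add_cosh y

theorem lorentzInner_dxPsi₀_dyPsi₀_add (H y : ℝ) {x : ℝ} (hx : cos x ≠ 0) :
    lorentzInner (dxPsi₀ H x y) (dyPsi₀ H x y) + 2 * H * tan x * (2 * H) = 0 := by
  simp only [lorentzInner, dxPsi₀, dyPsi₀, Matrix.cons_val_zero, Matrix.cons_val_one,
    Matrix.cons_val_two, Matrix.head_cons, Matrix.tail_cons, tan_eq_sin_div_cos]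
  field_simp
  linear_combination -4 * cos x ^ 2 * sin x * H ^ 2 * exp_neg_mul_sinh_add_cosh y

theorem psi₀_two_pos {H : ℝ} (hH : 4 * H ^ 2 ≤ 1) (y : ℝ) {x : ℝ} (hx : 0 < cos x) :
    0 < psi₀ H x y 2 := by
  have hcosh : exp (-y) / 2 < cosh y := by
    rw [cosh_eq]
    linarith [exp_pos y]
  have hlt : 2 * H ^ 2 * exp (-y) * cos x < cosh y / cos x := calc
    2 * H ^ 2 * exp (-y) * cos x ≤ exp (-y) / 2 := by
      nlinarith [exp_pos (-y), cos_le_one x, mul_pos (exp_pos (-y)) hx]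
    _ < cosh y := hcosh
    _ ≤ cosh y / cos x := le_div_self (cosh_pos y).le hx (cos_le_one x)
  simpa [psi₀] using hlt

/-- For `0 < H < 1/2`, the map `Ψ₀ = (ψ₀, η₀) : (-π/2,π/2) × ℝ → ℍ² × ℝ` is
conformal with conformal factor `1/((1-4H²)cos²x)`: `ψ₀` takes values in ℍ² and
`|Ψ₀_x|² = |Ψ₀_y|² = 1/((1-4H²)cos²x)`, `⟨Ψ₀_x, Ψ₀_y⟩ = 0`. -/
theorem stmt11 (H : ℝ) (hH0 : 0 < H) (hH : H < 1 / 2)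
    (ψ : ℝ → ℝ → Fin 3 → ℝ) (η : ℝ → ℝ → ℝ)
    (hψ : ψ = fun x y => fun i => (1 / Real.sqrt (1 - 4 * H ^ 2)) *
      (![Real.tan x,
         Real.sinh y / Real.cos x + 2 * H ^ 2 * Real.exp (-y) * Real.cos x,
         Real.cosh y / Real.cos x - 2 * H ^ 2 * Real.exp (-y) * Real.cos x] i))
    (hη : η = fun x y => (2 * H / Real.sqrt (1 - 4 * H ^ 2)) *
      (y - Real.log (Real.cos x))) :
    ∀ x ∈ Set.Ioo (-(Real.pi / 2)) (Real.pi / 2), ∀ y : ℝ,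
      (lorentzInner (ψ x y) (ψ x y) = -1 ∧ 0 < ψ x y 2) ∧
      lorentzInner (deriv (fun t => ψ t y) x) (deriv (fun t => ψ t y) x)
        + (deriv (fun t => η t y) x) ^ 2
        = 1 / ((1 - 4 * H ^ 2) * (Real.cos x) ^ 2) ∧
      lorentzInner (deriv (fun t => ψ x t) y) (deriv (fun t => ψ x t) y)
        + (deriv (fun t => η x t) y) ^ 2
        = 1 / ((1 - 4 * H ^ 2) * (Real.cos x) ^ 2) ∧
      lorentzInner (deriv (fun t => ψ t y) x) (deriv (fun t => ψ x t) y)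
        + (deriv (fun t => η t y) x) * (deriv (fun t => η x t) y) = 0 := by
  have hq : 0 < 1 - 4 * H ^ 2 := by nlinarith
  set c := 1 / √(1 - 4 * H ^ 2)
  have hc2 : c ^ 2 = 1 / (1 - 4 * H ^ 2) := by rw [div_pow, one_pow, sq_sqrt hq.le]
  have hψ₀ : ψ = fun x y => c • psi₀ H x y := by rw [hψ]; rfl
  intro x hx y
  have hcos : cos x ≠ 0 := (cos_pos_of_mem_Ioo hx).ne'
  have dψx : deriv (fun t => ψ t y) x = c • dxPsi₀ H x y := by
    rw [hψ₀]; exact ((hasDerivAt_psi₀_in_x H y hcos).const_smul c).deriv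
  have dψy : deriv (fun t => ψ x t) y = c • dyPsi₀ H x y := by
    rw [hψ₀]; exact ((hasDerivAt_psi₀_in_y H x y).const_smul c).deriv
  have dηx : deriv (fun t => η t y) x = c * (2 * H * tan x) := by
    rw [hη]
    exact (((hasDerivAt_const x y).sub (hasDerivAt_log_cos hcos)).const_mul _).deriv.trans (by ring)
  have dηy : deriv (fun t => η x t) y = c * (2 * H) := by
    rw [hη]
    exact (((hasDerivAt_id y).sub_const _).const_mul _).deriv.trans (by ring)
  have hconf : 1 / ((1 - 4 * H ^ 2) * cos x ^ 2) = c ^ 2 * (1 / cos x ^ 2) := by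
    rw [hc2, one_div_mul_one_div]
  rw [dψx, dψy, dηx, dηy, hψ₀, hconf]
  simp only [lorentzInner_smul]
  refine ⟨⟨?_, ?_⟩, ?_, ?_, ?_⟩
  · rw [lorentzInner_psi₀_self H y hcos, ← sq, hc2]
    field_simp
    ring
  · exact mul_pos (by positivity) (psi₀_two_pos (by linarith) y (cos_pos_of_mem_Ioo hx))
  · linear_combination c ^ 2 * lorentzInner_dxPsi₀_self_add H y hcos
  · linear_combination c ^ 2 * lorentzInner_dyPsi₀_self_add H y hcos
  · linear_combination c ^ 2 * lorentzInner_dxPsi₀_dyPsi₀_add H y hcos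
end
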